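/- Work in coordinates (z, y) on ℝ². Let σ, μ, u_z be real constants with μ ≠ 0, let φ : ℝ² → ℝ be twice continuously differentiable, let A_y, A_z : ℝ² → ℝ be three times continuously differentiable, let B_x : ℝ² → ℝ be continuous, and set b_x := ∂A_z/∂y − ∂A_y/∂z. Suppose for all (z, y): σ·∂φ/∂y − (1/μ)·ΔA_y − σ·u_z·b_x = σ·u_z·B_x and σ·∂φ/∂z − (1/μ)·ΔA_z = 0, where Δ = ∂²/∂z² + ∂²/∂y². Then for every smooth, compactly supported test function N : ℝ² → ℝ: σ·∫(∂N/∂z · ∂φ/∂y − ∂N/∂y · ∂φ/∂z) + (1/μ)·∫ ∇N·∇b_x − σ·u_z·∫ ∂N/∂z · b_x = σ·u_z·∫ ∂N/∂z · B_x, all integrals over ℝ². -/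

import Mathlib

open MeasureTheory

/-- Partial derivative `∂f/∂z` in coordinates `(z, y)` on `ℝ²`. -/
noncomputable def pdz (f : ℝ × ℝ → ℝ) (p : ℝ × ℝ) : ℝ :=
  fderiv ℝ f p (1, 0)

/-- Partial derivative `∂f/∂y` in coordinates `(z, y)` on `ℝ²`. -/
noncomputable def pdy (f : ℝ × ℝ → ℝ) (p : ℝ × ℝ) : ℝ :=
  fderiv ℝ f p (0, 1)

/-- Laplacian `Δf = ∂²f/∂z² + ∂²f/∂y²` in coordinates `(z, y)` on `ℝ²`. -/
noncomputable def lap2 (f : ℝ × ℝ → ℝ) (p : ℝ × ℝ) : ℝ :=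
  pdz (pdz f) p + pdy (pdy f) p

/-- The derivative in direction `v` of a `C^(n+1)` function is `C^n`. -/
lemma contDiff_pd {n : ℕ∞} {f : ℝ × ℝ → ℝ} (v : ℝ × ℝ)
    (hf : ContDiff ℝ (n + 1) f) :
    ContDiff ℝ n (fun p => fderiv ℝ f p v) :=
  (hf.fderiv_right (le_refl _)).clm_apply contDiff_const

lemma cont_pd {f : ℝ × ℝ → ℝ} (v : ℝ × ℝ) (hf : ContDiff ℝ 1 f) :
    Continuous (fun p => fderiv ℝ f p v) :=
  (hf.continuous_fderiv one_ne_zero).clm_apply continuous_const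

/-- Differentiation in direction `v` of a directional derivative is a second
derivative evaluation. -/
lemma hasFDerivAt_pd {f : ℝ × ℝ → ℝ} (hf : ContDiff ℝ 2 f) (v p : ℝ × ℝ) :
    HasFDerivAt (fun x => fderiv ℝ f x v)
      ((ContinuousLinearMap.apply ℝ ℝ v).comp (fderiv ℝ (fderiv ℝ f) p)) p := by
  have hdiff : Differentiable ℝ (fderiv ℝ f) :=
    (hf.fderiv_right (m := 1) (by norm_num)).differentiable one_ne_zero
  exact (ContinuousLinearMap.apply ℝ ℝ v).hasFDerivAt.comp p (hdiff p).hasFDerivAt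

lemma pd_symm {f : ℝ × ℝ → ℝ} (hf : ContDiff ℝ 2 f) (v w p : ℝ × ℝ) :
    fderiv ℝ (fun x => fderiv ℝ f x v) p w
      = fderiv ℝ (fun x => fderiv ℝ f x w) p v := by
  rw [(hasFDerivAt_pd hf v p).fderiv, (hasFDerivAt_pd hf w p).fderiv]
  have hsymm := hf.contDiffAt.isSymmSndFDerivAt (x := p) (by norm_num)
  simpa using hsymm w v

lemma pd_comm {f : ℝ × ℝ → ℝ} (hf : ContDiff ℝ 2 f) (p : ℝ × ℝ) :
    pdz (pdy f) p = pdy (pdz f) p := by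
  exact pd_symm hf (0, 1) (1, 0) p

lemma integrable_pd_mul {N f : ℝ × ℝ → ℝ} (v : ℝ × ℝ)
    (hN : ContDiff ℝ (⊤ : ℕ∞) N) (hNc : HasCompactSupport N) (hf : Continuous f) :
    Integrable (fun p => fderiv ℝ N p v * f p) := by
  apply Continuous.integrable_of_hasCompactSupport
  · exact (cont_pd v (hN.of_le (by simp))).mul hf
  · exact (hNc.fderiv_apply (𝕜 := ℝ) v).mul_right

/-- Integration by parts twice plus symmetry of second derivatives:
the "curl of a gradient" weighted integral vanishes. -/
lemma ibp_zero {g N : ℝ × ℝ → ℝ} (hg : ContDiff ℝ 2 g)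
    (hN : ContDiff ℝ (⊤ : ℕ∞) N) (hNc : HasCompactSupport N) :
    (∫ p : ℝ × ℝ, (pdz N p * pdy g p - pdy N p * pdz g p)) = 0 := by
  have hNd : Differentiable ℝ N := hN.differentiable (by simp)
  have hg' : ContDiff ℝ (1 + 1) g := hg.of_le (by norm_num)
  have hpdyg : ContDiff ℝ 1 (pdy g) := contDiff_pd (n := 1) (0, 1) hg'
  have hpdzg : ContDiff ℝ 1 (pdz g) := contDiff_pd (n := 1) (1, 0) hg'
  have hI1 : Integrable (fun p => pdz N p * pdy g p) :=
    integrable_pd_mul (1, 0) hN hNc (hpdyg.continuous)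
  have hI2 : Integrable (fun p => pdy N p * pdz g p) :=
    integrable_pd_mul (0, 1) hN hNc (hpdzg.continuous)
  have hIN1 : Integrable (fun p => N p * fderiv ℝ (pdy g) p (1, 0)) := by
    apply Continuous.integrable_of_hasCompactSupport
    · exact (hN.continuous).mul (cont_pd (1, 0) hpdyg)
    · exact hNc.mul_right
  have hIN2 : Integrable (fun p => N p * fderiv ℝ (pdz g) p (0, 1)) := by
    apply Continuous.integrable_of_hasCompactSupport
    · exact (hN.continuous).mul (cont_pd (0, 1) hpdzg)
    · exact hNc.mul_right
  have hINy : Integrable (fun p => N p * pdy g p) := by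
    apply Continuous.integrable_of_hasCompactSupport
    · exact (hN.continuous).mul hpdyg.continuous
    · exact hNc.mul_right
  have hINz : Integrable (fun p => N p * pdz g p) := by
    apply Continuous.integrable_of_hasCompactSupport
    · exact (hN.continuous).mul hpdzg.continuous
    · exact hNc.mul_right
  -- IBP in direction (1,0):  ∫ N * ∂z(∂y g) = - ∫ ∂z N * ∂y g
  have e1 : ∫ p : ℝ × ℝ, N p * fderiv ℝ (pdy g) p (1, 0)
      = - ∫ p : ℝ × ℝ, fderiv ℝ N p (1, 0) * pdy g p :=
    integral_mul_fderiv_eq_neg_fderiv_mul_of_integrable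
      (integrable_pd_mul (1, 0) hN hNc hpdyg.continuous) hIN1 hINy (fun x _ => hNd x)
      (fun x _ => hpdyg.differentiable one_ne_zero x)
  -- IBP in direction (0,1):  ∫ N * ∂y(∂z g) = - ∫ ∂y N * ∂z g
  have e2 : ∫ p : ℝ × ℝ, N p * fderiv ℝ (pdz g) p (0, 1)
      = - ∫ p : ℝ × ℝ, fderiv ℝ N p (0, 1) * pdz g p :=
    integral_mul_fderiv_eq_neg_fderiv_mul_of_integrable
      (integrable_pd_mul (0, 1) hN hNc hpdzg.continuous) hIN2 hINz (fun x _ => hNd x)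
      (fun x _ => hpdzg.differentiable one_ne_zero x)
  have esymm : ∀ p : ℝ × ℝ, fderiv ℝ (pdy g) p (1, 0) = fderiv ℝ (pdz g) p (0, 1) := by
    intro p
    exact pd_symm hg (0, 1) (1, 0) p
  have key : ∫ p : ℝ × ℝ, pdz N p * pdy g p = ∫ p : ℝ × ℝ, pdy N p * pdz g p := by
    have h1 : ∫ p : ℝ × ℝ, N p * fderiv ℝ (pdy g) p (1, 0)
        = ∫ p : ℝ × ℝ, N p * fderiv ℝ (pdz g) p (0, 1) := by
      congr 1; ext p; rw [esymm p]
    have := e1.symm.trans (h1.trans e2)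
    have := neg_injective this
    simpa [pdz, pdy] using this
  rw [integral_sub hI1 hI2, key, sub_self]

/-- the auxiliary weighted residual identity for the 2D moving
conductor problem with circulation of `A`: weighting the `A_y`-equation with
`∂N/∂z` and the `A_z`-equation with `-∂N/∂y`, summing and integrating by
parts gives
`σ ∫ (∂N/∂z ∂φ/∂y - ∂N/∂y ∂φ/∂z) + (1/μ) ∫ ∇N·∇b_x - σ u_z ∫ ∂N/∂z b_x
  = σ u_z ∫ ∂N/∂z B_x`. -/
theorem moving_conductor_2d_auxiliary_identity
    (σ μ u_z : ℝ) (hμ : μ ≠ 0)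
    (φ A_y A_z B_x : ℝ × ℝ → ℝ)
    (hφ : ContDiff ℝ 2 φ) (hAy : ContDiff ℝ 3 A_y) (hAz : ContDiff ℝ 3 A_z)
    (hB : Continuous B_x)
    (b_x : ℝ × ℝ → ℝ) (hb : b_x = fun p => pdy A_z p - pdz A_y p)
    (h1 : ∀ p : ℝ × ℝ,
        σ * pdy φ p - (1 / μ) * lap2 A_y p - σ * u_z * b_x p
          = σ * u_z * B_x p)
    (h2 : ∀ p : ℝ × ℝ, σ * pdz φ p - (1 / μ) * lap2 A_z p = 0) :
    ∀ N : ℝ × ℝ → ℝ, ContDiff ℝ (⊤ : ℕ∞) N → HasCompactSupport N →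
      σ * (∫ p : ℝ × ℝ, (pdz N p * pdy φ p - pdy N p * pdz φ p))
        + (1 / μ) * (∫ p : ℝ × ℝ, (pdz N p * pdz b_x p + pdy N p * pdy b_x p))
        - σ * u_z * (∫ p : ℝ × ℝ, pdz N p * b_x p)
      = σ * u_z * ∫ p : ℝ × ℝ, pdz N p * B_x p := by
  intro N hN hNc
  -- basic regularity
  have hAy' : ContDiff ℝ (2 + 1) A_y := hAy.of_le (by norm_num)
  have hAz' : ContDiff ℝ (2 + 1) A_z := hAz.of_le (by norm_num)
  have hAy2 : ContDiff ℝ 2 (pdz A_y) := contDiff_pd (n := 2) (1, 0) hAy'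
  have hAy2' : ContDiff ℝ 2 (pdy A_y) := contDiff_pd (n := 2) (0, 1) hAy'
  have hAz2 : ContDiff ℝ 2 (pdz A_z) := contDiff_pd (n := 2) (1, 0) hAz'
  have hAz2' : ContDiff ℝ 2 (pdy A_z) := contDiff_pd (n := 2) (0, 1) hAz'
  have hbC : ContDiff ℝ 2 b_x := by rw [hb]; exact hAz2'.sub hAy2
  -- g := divergence of A
  set g : ℝ × ℝ → ℝ := fun p => pdz A_z p + pdy A_y p with hgdef
  have hgC : ContDiff ℝ 2 g := hAz2.add hAy2'
  -- continuity facts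
  have hφy : Continuous (pdy φ) := cont_pd (0, 1) (hφ.of_le (by norm_num))
  have hφz : Continuous (pdz φ) := cont_pd (1, 0) (hφ.of_le (by norm_num))
  have hbz : Continuous (pdz b_x) := cont_pd (1, 0) (hbC.of_le (by norm_num))
  have hby : Continuous (pdy b_x) := cont_pd (0, 1) (hbC.of_le (by norm_num))
  have hgy : Continuous (pdy g) := cont_pd (0, 1) (hgC.of_le (by norm_num))
  have hgz : Continuous (pdz g) := cont_pd (1, 0) (hgC.of_le (by norm_num))
  have hlapAy : Continuous (lap2 A_y) := by
    have h1c : Continuous (pdz (pdz A_y)) := cont_pd (1, 0) (hAy2.of_le (by norm_num))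
    have h2c : Continuous (pdy (pdy A_y)) := cont_pd (0, 1) (hAy2'.of_le (by norm_num))
    exact h1c.add h2c
  have hlapAz : Continuous (lap2 A_z) := by
    have h1c : Continuous (pdz (pdz A_z)) := cont_pd (1, 0) (hAz2.of_le (by norm_num))
    have h2c : Continuous (pdy (pdy A_z)) := cont_pd (0, 1) (hAz2'.of_le (by norm_num))
    exact h1c.add h2c
  -- integrability of atomic terms
  have Iφy : Integrable (fun p => pdz N p * pdy φ p) := integrable_pd_mul _ hN hNc hφy
  have Iφz : Integrable (fun p => pdy N p * pdz φ p) := integrable_pd_mul _ hN hNc hφz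
  have Ibz : Integrable (fun p => pdz N p * pdz b_x p) := integrable_pd_mul _ hN hNc hbz
  have Iby : Integrable (fun p => pdy N p * pdy b_x p) := integrable_pd_mul _ hN hNc hby
  have Ib : Integrable (fun p => pdz N p * b_x p) :=
    integrable_pd_mul _ hN hNc hbC.continuous
  have IB : Integrable (fun p => pdz N p * B_x p) := integrable_pd_mul _ hN hNc hB
  have IlapAy : Integrable (fun p => pdz N p * lap2 A_y p) :=
    integrable_pd_mul _ hN hNc hlapAy
  have IlapAz : Integrable (fun p => pdy N p * lap2 A_z p) :=
    integrable_pd_mul _ hN hNc hlapAz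
  have Igy : Integrable (fun p => pdz N p * pdy g p) := integrable_pd_mul _ hN hNc hgy
  have Igz : Integrable (fun p => pdy N p * pdz g p) := integrable_pd_mul _ hN hNc hgz
  -- pointwise expansion of ∇N·∇b in terms of lap2 and g
  have hbdiff : ∀ p : ℝ × ℝ, pdz b_x p = pdz (pdy A_z) p - pdz (pdz A_y) p ∧
      pdy b_x p = pdy (pdy A_z) p - pdy (pdz A_y) p := by
    intro p
    have h1d : DifferentiableAt ℝ (pdy A_z) p :=
      (hAz2'.differentiable (by norm_num)) p
    have h2d : DifferentiableAt ℝ (pdz A_y) p :=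
      (hAy2.differentiable (by norm_num)) p
    constructor
    · calc pdz b_x p = fderiv ℝ (fun q => pdy A_z q - pdz A_y q) p (1, 0) := by
            rw [pdz, hb]
        _ = fderiv ℝ (pdy A_z) p (1, 0) - fderiv ℝ (pdz A_y) p (1, 0) := by
            rw [fderiv_fun_sub h1d h2d]; simp
        _ = pdz (pdy A_z) p - pdz (pdz A_y) p := rfl
    · calc pdy b_x p = fderiv ℝ (fun q => pdy A_z q - pdz A_y q) p (0, 1) := by
            rw [pdy, hb]
        _ = fderiv ℝ (pdy A_z) p (0, 1) - fderiv ℝ (pdz A_y) p (0, 1) := by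
            rw [fderiv_fun_sub h1d h2d]; simp
        _ = pdy (pdy A_z) p - pdy (pdz A_y) p := rfl
  have hpoint : ∀ p : ℝ × ℝ,
      pdz N p * pdz b_x p + pdy N p * pdy b_x p
        = (pdy N p * lap2 A_z p - pdz N p * lap2 A_y p)
          + (pdz N p * pdy g p - pdy N p * pdz g p) := by
    intro p
    obtain ⟨e1, e2⟩ := hbdiff p
    have hgy' : pdy g p = pdy (pdz A_z) p + pdy (pdy A_y) p := by
      have h1d : DifferentiableAt ℝ (pdz A_z) p :=
        (hAz2.differentiable (by norm_num)) p
      have h2d : DifferentiableAt ℝ (pdy A_y) p :=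
        (hAy2'.differentiable (by norm_num)) p
      calc pdy g p = fderiv ℝ (fun q => pdz A_z q + pdy A_y q) p (0, 1) := by
            rw [pdy, hgdef]
        _ = fderiv ℝ (pdz A_z) p (0, 1) + fderiv ℝ (pdy A_y) p (0, 1) := by
            rw [fderiv_fun_add h1d h2d]; simp
        _ = pdy (pdz A_z) p + pdy (pdy A_y) p := rfl
    have hgz' : pdz g p = pdz (pdz A_z) p + pdz (pdy A_y) p := by
      have h1d : DifferentiableAt ℝ (pdz A_z) p :=
        (hAz2.differentiable (by norm_num)) p
      have h2d : DifferentiableAt ℝ (pdy A_y) p :=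
        (hAy2'.differentiable (by norm_num)) p
      calc pdz g p = fderiv ℝ (fun q => pdz A_z q + pdy A_y q) p (1, 0) := by
            rw [pdz, hgdef]
        _ = fderiv ℝ (pdz A_z) p (1, 0) + fderiv ℝ (pdy A_y) p (1, 0) := by
            rw [fderiv_fun_add h1d h2d]; simp
        _ = pdz (pdz A_z) p + pdz (pdy A_y) p := rfl
    have s1 : pdz (pdy A_z) p = pdy (pdz A_z) p :=
      pd_comm (hAz.of_le (by norm_num)) p
    have s2 : pdz (pdy A_y) p = pdy (pdz A_y) p :=
      pd_comm (hAy.of_le (by norm_num)) p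
    rw [e1, e2, hgy', hgz', lap2, lap2, s1, s2]
    ring
  -- the auxiliary curl integral vanishes
  have hzero : (∫ p : ℝ × ℝ, (pdz N p * pdy g p - pdy N p * pdz g p)) = 0 :=
    ibp_zero hgC hN hNc
  -- rewrite the gradient term
  have IA : Integrable (fun p : ℝ × ℝ => pdy N p * lap2 A_z p - pdz N p * lap2 A_y p) :=
    IlapAz.sub IlapAy
  have IG : Integrable (fun p : ℝ × ℝ => pdz N p * pdy g p - pdy N p * pdz g p) :=
    Igy.sub Igz
  have hgrad : (∫ p : ℝ × ℝ, (pdz N p * pdz b_x p + pdy N p * pdy b_x p))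
      = ∫ p : ℝ × ℝ, (pdy N p * lap2 A_z p - pdz N p * lap2 A_y p) := by
    have e : (∫ p : ℝ × ℝ, (pdz N p * pdz b_x p + pdy N p * pdy b_x p))
        = ∫ p : ℝ × ℝ, ((pdy N p * lap2 A_z p - pdz N p * lap2 A_y p)
            + (pdz N p * pdy g p - pdy N p * pdz g p)) := by
      congr 1; funext p; exact hpoint p
    rw [e, integral_add IA IG, hzero, add_zero]
  -- use h1 integrated against pdz N
  have Ia : Integrable (fun p : ℝ × ℝ => σ * (pdz N p * pdy φ p)) := Iφy.const_mul σ
  have Ibb : Integrable (fun p : ℝ × ℝ => (1 / μ) * (pdz N p * lap2 A_y p)) :=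
    IlapAy.const_mul (1 / μ)
  have Iab : Integrable (fun p : ℝ × ℝ =>
      σ * (pdz N p * pdy φ p) - (1 / μ) * (pdz N p * lap2 A_y p)) := Ia.sub Ibb
  have Ic : Integrable (fun p : ℝ × ℝ => σ * u_z * (pdz N p * b_x p)) :=
    Ib.const_mul (σ * u_z)
  have hint1 : σ * (∫ p : ℝ × ℝ, pdz N p * pdy φ p)
      - (1 / μ) * (∫ p : ℝ × ℝ, pdz N p * lap2 A_y p)
      - σ * u_z * (∫ p : ℝ × ℝ, pdz N p * b_x p)
      = σ * u_z * ∫ p : ℝ × ℝ, pdz N p * B_x p := by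
    have e : ∫ p : ℝ × ℝ, (σ * (pdz N p * pdy φ p) - (1 / μ) * (pdz N p * lap2 A_y p)
          - σ * u_z * (pdz N p * b_x p))
        = ∫ p : ℝ × ℝ, σ * u_z * (pdz N p * B_x p) := by
      congr 1; funext p; linear_combination (pdz N p) * (h1 p)
    rw [integral_sub Iab Ic, integral_sub Ia Ibb, integral_const_mul, integral_const_mul,
      integral_const_mul, integral_const_mul] at e
    exact e
  -- use h2 integrated against pdy N
  have hint2 : σ * (∫ p : ℝ × ℝ, pdy N p * pdz φ p)
      = (1 / μ) * (∫ p : ℝ × ℝ, pdy N p * lap2 A_z p) := by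
    have e : ∫ p : ℝ × ℝ, σ * (pdy N p * pdz φ p)
        = ∫ p : ℝ × ℝ, (1 / μ) * (pdy N p * lap2 A_z p) := by
      congr 1; funext p; linear_combination (pdy N p) * (h2 p)
    rw [integral_const_mul, integral_const_mul] at e
    exact e
  rw [integral_sub Iφy Iφz, hgrad, integral_sub IlapAz IlapAy]
  linear_combination hint1 - hint2
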